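/- arXiv:1811.09474 — 7 statements merged into one kernel-verified Lean document; each statement's English description precedes it below -/
import Mathlib

section
/- Let T be a time scale, let t ∈ T, let λ > 0, and let f, g, p : ℝ → ℝ with f and g nonnegative and with f and g continuous at t relative to T. If L_f is a structural derivative of f at t and L_g is a structural derivative of g at t (both associated with λ and p), then L_f · g(t)^λ + f(σ(t))^λ · L_g is a structural derivative of the product function f·g at t associated with λ and p. -/
open scoped Classical in
/-- The forward jump operator of a time scale `T` (a nonempty closed subset of `ℝ`):
`σ(t) = inf {s ∈ T | t < s}` if that set is nonempty, and `σ(t) = t` otherwise. -/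
noncomputable def tsSigma (T : Set ℝ) (t : ℝ) : ℝ :=
  if {s | s ∈ T ∧ t < s}.Nonempty then sInf {s | s ∈ T ∧ t < s} else t

/-- `L` is a structural derivative of `f` at `t ∈ T`, associated with exponent `lam`
and structural function `p`: for every `ε > 0` there is `δ > 0` such that
`|f(σ(t))^lam − f(s)^lam − L·(p(σ(t)) − p(s))| ≤ ε·|p(σ(t)) − p(s)|`
for all `s ∈ T` with `|s − t| < δ`.  Here `^` is the real power function `Real.rpow`. -/
def IsStructDeriv (T : Set ℝ) (p f : ℝ → ℝ) (lam t L : ℝ) : Prop :=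
  ∀ ε : ℝ, 0 < ε → ∃ δ : ℝ, 0 < δ ∧ ∀ s ∈ T, |s - t| < δ →
    |f (tsSigma T t) ^ lam - f s ^ lam - L * (p (tsSigma T t) - p s)| ≤
      ε * |p (tsSigma T t) - p s|

/-- First product rule for the structural derivative on time scales. -/
theorem structDeriv_mul
    (T : Set ℝ) (hTne : T.Nonempty) (hTc : IsClosed T)
    (t : ℝ) (ht : t ∈ T) (lam : ℝ) (hlam : 0 < lam)
    (f g p : ℝ → ℝ) (hf : ∀ s, 0 ≤ f s) (hg : ∀ s, 0 ≤ g s)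
    (hfc : ContinuousWithinAt f T t) (hgc : ContinuousWithinAt g T t)
    (Lf Lg : ℝ)
    (hLf : IsStructDeriv T p f lam t Lf) (hLg : IsStructDeriv T p g lam t Lg) :
    IsStructDeriv T p (fun s => f s * g s) lam t
      (Lf * g t ^ lam + f (tsSigma T t) ^ lam * Lg) := by

  intro ε hε
  set σt := tsSigma T t with hσ
  set A := f σt ^ lam with hA
  have hA0 : 0 ≤ A := Real.rpow_nonneg (hf _) _
  set c := g t ^ lam with hc
  have hc0 : 0 ≤ c := Real.rpow_nonneg (hg _) _
  set M := c + 1 with hM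
  have hM0 : 0 < M := by positivity
  -- continuity of s ↦ g s ^ lam at t within T
  have hgc' : ContinuousWithinAt (fun s => g s ^ lam) T t :=
    (Real.continuousAt_rpow_const (g t) lam (Or.inr hlam.le)).comp_continuousWithinAt hgc
  have hεb : (0:ℝ) < min 1 (ε / (3 * (|Lf| + 1))) := by positivity
  obtain ⟨δ0, hδ0, h0⟩ := Metric.continuousWithinAt_iff.mp hgc' _ hεb
  obtain ⟨δ1, hδ1, h1⟩ := hLf (ε / (3 * M)) (by positivity)
  obtain ⟨δ2, hδ2, h2⟩ := hLg (ε / (3 * (A + 1))) (by positivity)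
  refine ⟨min δ0 (min δ1 δ2), by positivity, ?_⟩
  intro s hs hsd
  have hsd0 : dist s t < δ0 := by rw [Real.dist_eq]; exact lt_of_lt_of_le hsd (min_le_left _ _)
  have hsd1 : |s - t| < δ1 := lt_of_lt_of_le hsd (le_trans (min_le_right _ _) (min_le_left _ _))
  have hsd2 : |s - t| < δ2 := lt_of_lt_of_le hsd (le_trans (min_le_right _ _) (min_le_right _ _))
  have hb0 := h0 hs hsd0
  rw [Real.dist_eq] at hb0
  set q := p σt - p s with hq
  set a := f s ^ lam with ha
  set b := g s ^ lam with hb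
  set B := g σt ^ lam with hB
  have hbc1 : |b - c| < 1 := lt_of_lt_of_le hb0 (min_le_left _ _)
  have hbc2 : |b - c| ≤ ε / (3 * (|Lf| + 1)) := le_of_lt (lt_of_lt_of_le hb0 (min_le_right _ _))
  have hbnn : 0 ≤ b := Real.rpow_nonneg (hg _) _
  have hbM : b ≤ M := by
    have := abs_lt.mp hbc1
    simp only [hM]; linarith [this.2]
  have key1 : |A - a - Lf * q| ≤ ε / (3 * M) * |q| := h1 s hs hsd1
  have key2 : |B - b - Lg * q| ≤ ε / (3 * (A + 1)) * |q| := h2 s hs hsd2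
  have hmulσ : (f σt * g σt) ^ lam = A * B := Real.mul_rpow (hf _) (hg _)
  have hmuls : (f s * g s) ^ lam = a * b := Real.mul_rpow (hf _) (hg _)
  have hid : A * B - a * b - (Lf * c + A * Lg) * q
      = (A - a - Lf * q) * b + A * (B - b - Lg * q) + Lf * (b - c) * q := by ring
  calc |(fun s => f s * g s) σt ^ lam - (fun s => f s * g s) s ^ lam
        - (Lf * c + A * Lg) * q|
      = |(A - a - Lf * q) * b + A * (B - b - Lg * q) + Lf * (b - c) * q| := by
        simp only [hmulσ, hmuls, hid]
    _ ≤ |(A - a - Lf * q) * b| + |A * (B - b - Lg * q)| + |Lf * (b - c) * q| := by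
        exact (abs_add_le _ _).trans (by gcongr; exact abs_add_le _ _)
    _ ≤ (ε / (3 * M) * |q|) * M + A * (ε / (3 * (A + 1)) * |q|)
        + |Lf| * (ε / (3 * (|Lf| + 1))) * |q| := by
        gcongr ?_ + ?_ + ?_
        · rw [abs_mul]
          have : |b| = b := abs_of_nonneg hbnn
          rw [this]
          exact mul_le_mul key1 hbM hbnn (by positivity)
        · rw [abs_mul, abs_of_nonneg hA0]
          exact mul_le_mul_of_nonneg_left key2 hA0
        · rw [abs_mul, abs_mul]
          exact mul_le_mul_of_nonneg_right (mul_le_mul_of_nonneg_left hbc2 (abs_nonneg _)) (abs_nonneg _)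
    _ ≤ ε / 3 * |q| + ε / 3 * |q| + ε / 3 * |q| := by
        have hx : (0:ℝ) ≤ ε / 3 * |q| := by positivity
        have hA1 : A + 1 ≠ 0 := by positivity
        have hLf1 : |Lf| + 1 ≠ 0 := by positivity
        gcongr ?_ + ?_ + ?_
        · have heq : ε / (3 * M) * |q| * M = ε / 3 * |q| * (M / M) := by
            rw [← div_div, div_mul_eq_mul_div, div_mul_eq_mul_div, mul_div_assoc]
          rw [heq, div_self (ne_of_gt hM0), mul_one]
        · rw [show A * (ε / (3 * (A + 1)) * |q|) = ε / 3 * |q| * (A / (A + 1)) by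
            rw [← div_div]; ring]
          exact mul_le_of_le_one_right hx (by rw [div_le_one (by positivity)]; linarith)
        · rw [show |Lf| * (ε / (3 * (|Lf| + 1))) * |q| = ε / 3 * |q| * (|Lf| / (|Lf| + 1)) by
            rw [← div_div]; ring]
          exact mul_le_of_le_one_right hx
            (by rw [div_le_one (by positivity)]; linarith [abs_nonneg Lf])
    _ = ε * |q| := by ring
end

section
/- Let T be a time scale, let t ∈ T, let λ > 0, and let f, g, p : ℝ → ℝ with f and g nonnegative and with f and g continuous at t relative to T. If L_f is a structural derivative of f at t and L_g is a structural derivative of g at t (both associated with λ and p), then L_f · g(σ(t))^λ + f(t)^λ · L_g is a structural derivative of the product function f·g at t associated with λ and p. -/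
/-- Second product rule for the structural derivative on time scales. -/
theorem structDeriv_mul'
    (T : Set ℝ) (hTne : T.Nonempty) (hTc : IsClosed T)
    (t : ℝ) (ht : t ∈ T) (lam : ℝ) (hlam : 0 < lam)
    (f g p : ℝ → ℝ) (hf : ∀ s, 0 ≤ f s) (hg : ∀ s, 0 ≤ g s)
    (hfc : ContinuousWithinAt f T t) (hgc : ContinuousWithinAt g T t)
    (Lf Lg : ℝ)
    (hLf : IsStructDeriv T p f lam t Lf) (hLg : IsStructDeriv T p g lam t Lg) :
    IsStructDeriv T p (fun s => f s * g s) lam t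
      (Lf * g (tsSigma T t) ^ lam + f t ^ lam * Lg) := by
  intro ε hε
  set σ := tsSigma T t with hσ
  have hflc : ContinuousWithinAt (fun s => f s ^ lam) T t :=
    hfc.rpow_const (Or.inr hlam.le)
  have hC : 0 ≤ g σ ^ lam := Real.rpow_nonneg (hg σ) lam
  have hD : 0 ≤ f t ^ lam := Real.rpow_nonneg (hf t) lam
  have hC1 : g σ ^ lam + 1 ≠ 0 := by positivity
  have hD1 : f t ^ lam + 1 ≠ 0 := by positivity
  have hL1 : |Lg| + 1 ≠ 0 := by positivity
  have hεf : 0 < ε / (3 * (g σ ^ lam + 1)) := by positivity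
  have hεg : 0 < ε / (3 * (f t ^ lam + 1)) := by positivity
  have hεc : 0 < min 1 (ε / (3 * (|Lg| + 1))) := by positivity
  obtain ⟨δ1, hδ1, h1⟩ := hLf _ hεf
  obtain ⟨δ2, hδ2, h2⟩ := hLg _ hεg
  obtain ⟨δ3, hδ3, h3⟩ := Metric.continuousWithinAt_iff.mp hflc _ hεc
  refine ⟨min δ1 (min δ2 δ3), by positivity, fun s hs hsd => ?_⟩
  have hd1 : |s - t| < δ1 := lt_of_lt_of_le hsd (min_le_left _ _)
  have hd2 : |s - t| < δ2 := lt_of_lt_of_le hsd ((min_le_right _ _).trans (min_le_left _ _))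
  have hd3 : dist s t < δ3 := by
    rw [Real.dist_eq]
    exact lt_of_lt_of_le hsd ((min_le_right _ _).trans (min_le_right _ _))
  have H1 := h1 s hs hd1
  have H2 := h2 s hs hd2
  have H3 : |f s ^ lam - f t ^ lam| < min 1 (ε / (3 * (|Lg| + 1))) := by
    have := h3 hs hd3
    rwa [Real.dist_eq] at this
  have hfs : 0 ≤ f s ^ lam := Real.rpow_nonneg (hf s) lam
  have hfsb : f s ^ lam ≤ f t ^ lam + 1 := by
    have := (abs_lt.mp (H3.trans_le (min_le_left _ _))).2
    linarith
  have H3' : |f s ^ lam - f t ^ lam| ≤ ε / (3 * (|Lg| + 1)) :=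
    le_of_lt (lt_of_lt_of_le H3 (min_le_right _ _))
  set Δ := p σ - p s with hΔ
  have hΔ0 : 0 ≤ |Δ| := abs_nonneg _
  have key : (f σ * g σ) ^ lam - (f s * g s) ^ lam
      - (Lf * g σ ^ lam + f t ^ lam * Lg) * Δ
      = g σ ^ lam * (f σ ^ lam - f s ^ lam - Lf * Δ)
        + f s ^ lam * (g σ ^ lam - g s ^ lam - Lg * Δ)
        + Lg * Δ * (f s ^ lam - f t ^ lam) := by
    rw [Real.mul_rpow (hf σ) (hg σ), Real.mul_rpow (hf s) (hg s)]
    ring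
  have e1eq : (g σ ^ lam + 1) * (ε / (3 * (g σ ^ lam + 1)) * |Δ|) = ε / 3 * |Δ| := by
    field_simp
  have e2eq : (f t ^ lam + 1) * (ε / (3 * (f t ^ lam + 1)) * |Δ|) = ε / 3 * |Δ| := by
    field_simp
  have e3eq : (|Lg| + 1) * |Δ| * (ε / (3 * (|Lg| + 1))) = ε / 3 * |Δ| := by
    field_simp
  have B1 : |g σ ^ lam * (f σ ^ lam - f s ^ lam - Lf * Δ)| ≤ ε / 3 * |Δ| := by
    rw [abs_mul, abs_of_nonneg hC]
    calc g σ ^ lam * |f σ ^ lam - f s ^ lam - Lf * Δ|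
        ≤ (g σ ^ lam + 1) * (ε / (3 * (g σ ^ lam + 1)) * |Δ|) := by
          apply mul_le_mul (by linarith) H1 (abs_nonneg _) (by positivity)
      _ = ε / 3 * |Δ| := e1eq
  have B2 : |f s ^ lam * (g σ ^ lam - g s ^ lam - Lg * Δ)| ≤ ε / 3 * |Δ| := by
    rw [abs_mul, abs_of_nonneg hfs]
    calc f s ^ lam * |g σ ^ lam - g s ^ lam - Lg * Δ|
        ≤ (f t ^ lam + 1) * (ε / (3 * (f t ^ lam + 1)) * |Δ|) := by
          apply mul_le_mul hfsb H2 (abs_nonneg _) (by positivity)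
      _ = ε / 3 * |Δ| := e2eq
  have B3 : |Lg * Δ * (f s ^ lam - f t ^ lam)| ≤ ε / 3 * |Δ| := by
    rw [abs_mul, abs_mul]
    calc |Lg| * |Δ| * |f s ^ lam - f t ^ lam|
        ≤ (|Lg| + 1) * |Δ| * (ε / (3 * (|Lg| + 1))) := by
          apply mul_le_mul (by nlinarith [abs_nonneg Lg]) H3' (abs_nonneg _) (by positivity)
      _ = ε / 3 * |Δ| := e3eq
  have main : |(f σ * g σ) ^ lam - (f s * g s) ^ lam
      - (Lf * g σ ^ lam + f t ^ lam * Lg) * Δ| ≤ ε * |Δ| := by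
    rw [key]
    calc |g σ ^ lam * (f σ ^ lam - f s ^ lam - Lf * Δ)
          + f s ^ lam * (g σ ^ lam - g s ^ lam - Lg * Δ)
          + Lg * Δ * (f s ^ lam - f t ^ lam)|
        ≤ |g σ ^ lam * (f σ ^ lam - f s ^ lam - Lf * Δ)
          + f s ^ lam * (g σ ^ lam - g s ^ lam - Lg * Δ)|
          + |Lg * Δ * (f s ^ lam - f t ^ lam)| := abs_add_le _ _
      _ ≤ |g σ ^ lam * (f σ ^ lam - f s ^ lam - Lf * Δ)|
          + |f s ^ lam * (g σ ^ lam - g s ^ lam - Lg * Δ)|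
          + |Lg * Δ * (f s ^ lam - f t ^ lam)| := by
            have := abs_add_le (g σ ^ lam * (f σ ^ lam - f s ^ lam - Lf * Δ))
              (f s ^ lam * (g σ ^ lam - g s ^ lam - Lg * Δ))
            linarith
      _ ≤ ε * |Δ| := by linarith
  simpa [hΔ] using main
end

section
/- Let T be a time scale, let t ∈ T, let λ > 0, and let f, p : ℝ → ℝ with f taking strictly positive values and with f continuous at t relative to T. If L_f is a structural derivative of f at t associated with λ and p, then −L_f / (f(σ(t))^λ · f(t)^λ) is a structural derivative of the reciprocal function s ↦ 1/f(s) at t associated with λ and p. -/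
/-- Reciprocal rule for the structural derivative on time scales. -/
theorem structDeriv_inv
    (T : Set ℝ) (hTne : T.Nonempty) (hTc : IsClosed T)
    (t : ℝ) (ht : t ∈ T) (lam : ℝ) (hlam : 0 < lam)
    (f p : ℝ → ℝ) (hf : ∀ s, 0 < f s)
    (hfc : ContinuousWithinAt f T t)
    (Lf : ℝ) (hLf : IsStructDeriv T p f lam t Lf) :
    IsStructDeriv T p (fun s => 1 / f s) lam t
      (-Lf / (f (tsSigma T t) ^ lam * f t ^ lam)) := by
  intro ε hε
  set σ := tsSigma T t with hσ
  set A := f σ ^ lam with hA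
  set C := f t ^ lam with hC
  have hApos : 0 < A := Real.rpow_pos_of_pos (hf σ) lam
  have hCpos : 0 < C := Real.rpow_pos_of_pos (hf t) lam
  -- choice of parameters
  set ε₁ : ℝ := ε * A * C / 4 with hε₁def
  have hε₁ : 0 < ε₁ := by positivity
  set η : ℝ := min (C / 2) (ε * A * C ^ 2 / (4 * (|Lf| + 1))) with hηdef
  have hη : 0 < η := by
    apply lt_min (by positivity)
    have : 0 < |Lf| + 1 := by positivity
    positivity
  obtain ⟨δ₁, hδ₁, h₁⟩ := hLf ε₁ hε₁
  have hg : ContinuousWithinAt (fun s => f s ^ lam) T t :=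
    hfc.rpow_const (Or.inl (hf t).ne')
  rw [Metric.continuousWithinAt_iff] at hg
  obtain ⟨δ₂, hδ₂, h₂⟩ := hg η hη
  refine ⟨min δ₁ δ₂, lt_min hδ₁ hδ₂, fun s hs hst => ?_⟩
  have hst₁ : |s - t| < δ₁ := lt_of_lt_of_le hst (min_le_left _ _)
  have hst₂ : dist s t < δ₂ := by
    rw [Real.dist_eq]; exact lt_of_lt_of_le hst (min_le_right _ _)
  set B := f s ^ lam with hB
  have hBpos : 0 < B := Real.rpow_pos_of_pos (hf s) lam
  have hBC : |B - C| < η := by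
    have := h₂ hs hst₂
    rwa [Real.dist_eq] at this
  have hBC' : |B - C| ≤ η := le_of_lt hBC
  have hBge : C / 2 ≤ B := by
    have h1 : |B - C| < C / 2 := lt_of_lt_of_le hBC (min_le_left _ _)
    have := abs_lt.mp h1
    linarith [this.1]
  have hBCη : |B - C| ≤ ε * A * C ^ 2 / (4 * (|Lf| + 1)) :=
    le_trans hBC' (min_le_right _ _)
  set Δ := p σ - p s with hΔ
  have hD : |A - B - Lf * Δ| ≤ ε₁ * |Δ| := h₁ s hs hst₁
  clear_value σ η Δ
  -- rewrite the goal using `1/a^λ = 1/(a^λ)`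
  have e1 : (1 / f σ) ^ lam = 1 / A := by
    rw [hA, one_div, Real.inv_rpow (hf σ).le, one_div]
  have e2 : (1 / f s) ^ lam = 1 / B := by
    rw [hB, one_div, Real.inv_rpow (hf s).le, one_div]
  show |(1 / f σ) ^ lam - (1 / f s) ^ lam - (-Lf / (A * C)) * Δ| ≤ ε * |Δ|
  clear_value A B C ε₁
  rw [e1, e2]
  have hA0 : A ≠ 0 := hApos.ne'
  have hB0 : B ≠ 0 := hBpos.ne'
  have hC0 : C ≠ 0 := hCpos.ne'
  have key : 1 / A - 1 / B - (-Lf / (A * C)) * Δ =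
      -(1 / (A * B)) * ((A - B - Lf * Δ) + Lf * Δ * (C - B) / C) := by
    field_simp
    ring
  have habs : |1 / A - 1 / B - (-Lf / (A * C)) * Δ| ≤
      (1 / (A * B)) * (ε₁ * |Δ| + |Lf| * |B - C| / C * |Δ|) := by
    rw [key, abs_mul, abs_neg, abs_of_pos (by positivity : (0:ℝ) < 1 / (A * B))]
    gcongr 1 / (A * B) * ?_
    calc |(A - B - Lf * Δ) + Lf * Δ * (C - B) / C|
        ≤ |A - B - Lf * Δ| + |Lf * Δ * (C - B) / C| := abs_add_le _ _
      _ ≤ ε₁ * |Δ| + |Lf| * |B - C| / C * |Δ| := by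
          refine add_le_add hD (le_of_eq ?_)
          rw [abs_div, abs_mul, abs_mul, abs_of_pos hCpos, ← abs_neg (C - B)]
          ring_nf
  refine le_trans habs ?_
  -- final numeric estimate
  have hLf1 : (0:ℝ) < |Lf| + 1 := by positivity
  have h5 : |Lf| * |B - C| / C ≤ ε * A * C / 4 := by
    rw [div_le_iff₀ hCpos]
    have h6 : |Lf| * |B - C| ≤ |Lf| * (ε * A * C ^ 2 / (4 * (|Lf| + 1))) :=
      mul_le_mul_of_nonneg_left hBCη (abs_nonneg _)
    have h7 : |Lf| * (ε * A * C ^ 2 / (4 * (|Lf| + 1))) ≤ ε * A * C / 4 * C := by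
      have hX : (0:ℝ) ≤ ε * A * C ^ 2 := by positivity
      rw [mul_div_assoc', div_le_iff₀ (by positivity : (0:ℝ) < 4 * (|Lf| + 1))]
      linarith [hX]
    linarith
  have h8 : ε₁ * |Δ| + |Lf| * |B - C| / C * |Δ| ≤ (ε * A * C / 2) * |Δ| := by
    rw [hε₁def]
    linarith [mul_le_mul_of_nonneg_right h5 (abs_nonneg Δ)]
  have h9 : 1 / (A * B) * ((ε * A * C / 2) * |Δ|) ≤ ε * |Δ| := by
    rw [div_mul_eq_mul_div, one_mul, div_le_iff₀ (mul_pos hApos hBpos)]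
    linarith [mul_le_mul_of_nonneg_left hBge
      (mul_nonneg (mul_nonneg hε.le (abs_nonneg Δ)) hApos.le)]
  calc 1 / (A * B) * (ε₁ * |Δ| + |Lf| * |B - C| / C * |Δ|)
      ≤ 1 / (A * B) * ((ε * A * C / 2) * |Δ|) :=
        mul_le_mul_of_nonneg_left h8 (one_div_pos.mpr (mul_pos hApos hBpos)).le
    _ ≤ ε * |Δ| := h9
end

section
/- Let T be a time scale, let t ∈ T, let λ > 0, and let f, g, p : ℝ → ℝ with f nonnegative, g taking strictly positive values, and f and g continuous at t relative to T. If L_f is a structural derivative of f at t and L_g is a structural derivative of g at t (both associated with λ and p), then (L_f · g(t)^λ − f(t)^λ · L_g) / (g(σ(t))^λ · g(t)^λ) is a structural derivative of the quotient function s ↦ f(s)/g(s) at t associated with λ and p. -/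
/-- Quotient rule for the structural derivative on time scales. -/
theorem structDeriv_div
    (T : Set ℝ) (hTne : T.Nonempty) (hTc : IsClosed T)
    (t : ℝ) (ht : t ∈ T) (lam : ℝ) (hlam : 0 < lam)
    (f g p : ℝ → ℝ) (hf : ∀ s, 0 ≤ f s) (hg : ∀ s, 0 < g s)
    (hfc : ContinuousWithinAt f T t) (hgc : ContinuousWithinAt g T t)
    (Lf Lg : ℝ)
    (hLf : IsStructDeriv T p f lam t Lf) (hLg : IsStructDeriv T p g lam t Lg) :
    IsStructDeriv T p (fun s => f s / g s) lam t
      ((Lf * g t ^ lam - f t ^ lam * Lg) / (g (tsSigma T t) ^ lam * g t ^ lam)) := by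
  intro ε hε
  set σt := tsSigma T t with hσt
  have hCg : (0:ℝ) < g σt ^ lam := Real.rpow_pos_of_pos (hg _) lam
  set M : ℝ := f t ^ lam / g t ^ lam with hMdef
  have hM0 : 0 ≤ M :=
    div_nonneg (Real.rpow_nonneg (hf t) _) (Real.rpow_pos_of_pos (hg t) _).le
  set ε1 : ℝ := ε * (g σt ^ lam) / (2 * (M + 2)) with hε1def
  set η : ℝ := ε * (g σt ^ lam) / (2 * (|Lg| + 1)) with hηdef
  have hε1 : 0 < ε1 := by positivity
  have hη : 0 < η := by positivity
  obtain ⟨δ1, hδ1, H1⟩ := hLf ε1 hε1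
  obtain ⟨δ2, hδ2, H2⟩ := hLg ε1 hε1
  have hq : ContinuousWithinAt (fun s => f s ^ lam / g s ^ lam) T t := by
    exact (hfc.rpow_const (Or.inr hlam.le)).div (hgc.rpow_const (Or.inr hlam.le))
      (Real.rpow_pos_of_pos (hg t) lam).ne'
  rw [Metric.continuousWithinAt_iff] at hq
  obtain ⟨δ3, hδ3, H3⟩ := hq (min η 1) (lt_min hη one_pos)
  refine ⟨min δ1 (min δ2 δ3), by positivity, fun s hs hst => ?_⟩
  have hs1 := H1 s hs (lt_of_lt_of_le hst (min_le_left _ _))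
  have hs2 := H2 s hs (lt_of_lt_of_le hst ((min_le_right _ _).trans (min_le_left _ _)))
  have hs3 := H3 hs (by
    rw [Real.dist_eq]
    exact lt_of_lt_of_le hst ((min_le_right _ _).trans (min_le_right _ _)))
  set P : ℝ := p σt - p s with hPdef
  set a : ℝ := f σt ^ lam - f s ^ lam - Lf * P with hadef
  set b : ℝ := g σt ^ lam - g s ^ lam - Lg * P with hbdef
  set q : ℝ := f s ^ lam / g s ^ lam with hqdef
  have hq0 : 0 ≤ q :=
    div_nonneg (Real.rpow_nonneg (hf s) _) (Real.rpow_pos_of_pos (hg s) _).le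
  have hqM : |q - M| < min η 1 := by
    simpa [Real.dist_eq] using hs3
  have hqMη : |q - M| ≤ η := (hqM.trans_le (min_le_left _ _)).le
  have hqle : q ≤ M + 1 := by
    have := (abs_lt.mp (hqM.trans_le (min_le_right _ _))).2
    linarith
  have h1 : g σt ^ lam ≠ 0 := hCg.ne'
  have h2 : g s ^ lam ≠ 0 := (Real.rpow_pos_of_pos (hg s) _).ne'
  have h3 : g t ^ lam ≠ 0 := (Real.rpow_pos_of_pos (hg t) _).ne'
  have key : (f σt / g σt) ^ lam - (f s / g s) ^ lam -
      ((Lf * g t ^ lam - f t ^ lam * Lg) / (g σt ^ lam * g t ^ lam)) * P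
      = (a - q * b - Lg * P * (q - M)) / (g σt ^ lam) := by
    rw [Real.div_rpow (hf _) (hg _).le, Real.div_rpow (hf _) (hg _).le]
    simp only [hadef, hbdef, hqdef, hMdef]
    field_simp
    ring
  show |(f σt / g σt) ^ lam - (f s / g s) ^ lam - _ * P| ≤ ε * |P|
  rw [key, abs_div, abs_of_pos hCg, div_le_iff₀ hCg]
  have tri : |a - q * b - Lg * P * (q - M)| ≤ |a| + |q| * |b| + |Lg| * |P| * |q - M| :=
    calc |a - q * b - Lg * P * (q - M)|
        ≤ |a - q * b| + |Lg * P * (q - M)| := abs_sub _ _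
      _ ≤ |a| + |q * b| + |Lg * P * (q - M)| := by linarith [abs_sub a (q * b)]
      _ = |a| + |q| * |b| + |Lg| * |P| * |q - M| := by rw [abs_mul, abs_mul, abs_mul]
  have e1 : |q| * |b| ≤ (M + 1) * (ε1 * |P|) := by
    rw [abs_of_nonneg hq0]
    exact mul_le_mul hqle hs2 (abs_nonneg _) (by linarith)
  have e2 : |Lg| * |P| * |q - M| ≤ (|Lg| + 1) * η * |P| := by
    have h4 : |Lg| * |P| * |q - M| ≤ |Lg| * |P| * η :=
      mul_le_mul_of_nonneg_left hqMη (by positivity)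
    have h5 : |Lg| * |P| * η ≤ (|Lg| + 1) * |P| * η := by
      have : |Lg| * |P| ≤ (|Lg| + 1) * |P| :=
        mul_le_mul_of_nonneg_right (by linarith) (abs_nonneg _)
      exact mul_le_mul_of_nonneg_right this hη.le
    nlinarith
  have c1 : (M + 2) * ε1 = ε * (g σt ^ lam) / 2 := by
    rw [hε1def]; field_simp
  have c2 : (|Lg| + 1) * η = ε * (g σt ^ lam) / 2 := by
    rw [hηdef]; field_simp
  have e0 : |a| ≤ ε1 * |P| := hs1
  have e3 : ε1 * |P| + (M + 1) * (ε1 * |P|) = ε * (g σt ^ lam) / 2 * |P| := by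
    have h : ε1 * |P| + (M + 1) * (ε1 * |P|) = ((M + 2) * ε1) * |P| := by ring
    rw [h, c1]
  have e4 : (|Lg| + 1) * η * |P| = ε * (g σt ^ lam) / 2 * |P| := by rw [c2]
  have e5 : ε * |P| * (g σt ^ lam) =
      ε * (g σt ^ lam) / 2 * |P| + ε * (g σt ^ lam) / 2 * |P| := by ring
  linarith
end

section
/- The structural derivative on time scales does not satisfy the usual sum rule: let T be a time scale, let t ∈ T with t ≥ 0 be right-scattered (σ(t) > t), let λ > 0 with λ ≠ 1, and let p : ℝ → ℝ be continuous at t relative to T with p(σ(t)) ≠ p(t). With f(s) = s and g(s) = 2s, the structural derivative of f + g at t equals 3^λ · (σ(t)^λ − t^λ)/(p(σ(t)) − p(t)), the sum of the structural derivatives of f and of g at t equals (1 + 2^λ) · (σ(t)^λ − t^λ)/(p(σ(t)) − p(t)), and these two numbers are distinct (since 0 ≤ t < σ(t) gives σ(t)^λ ≠ t^λ, and 3^λ ≠ 1 + 2^λ for λ ≠ 1). -/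
/-- General lemma: if `s ↦ f(s)^lam` and `p` are continuous within `T` at `t` and
`p(σ(t)) ≠ p(t)`, then the difference quotient is a structural derivative. -/
lemma isStructDeriv_quot (T : Set ℝ) (p f : ℝ → ℝ) (lam t : ℝ)
    (hfc : ContinuousWithinAt (fun s => f s ^ lam) T t)
    (hpc : ContinuousWithinAt p T t)
    (hp : p (tsSigma T t) ≠ p t) :
    IsStructDeriv T p f lam t
      ((f (tsSigma T t) ^ lam - f t ^ lam) / (p (tsSigma T t) - p t)) := by
  intro ε hε
  set σ := tsSigma T t with hσ
  set L := (f σ ^ lam - f t ^ lam) / (p σ - p t) with hL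
  set c := |p σ - p t| with hc
  have hc0 : 0 < c := abs_pos.2 (sub_ne_zero.2 hp)
  have hG : ContinuousWithinAt
      (fun s => f σ ^ lam - f s ^ lam - L * (p σ - p s)) T t := by
    exact ((continuousWithinAt_const.sub hfc).sub
      (continuousWithinAt_const.mul (continuousWithinAt_const.sub hpc)))
  have hGt : f σ ^ lam - f t ^ lam - L * (p σ - p t) = 0 := by
    rw [hL, div_mul_eq_mul_div, mul_div_assoc, div_self (sub_ne_zero.2 hp), mul_one,
      sub_self]
  have h1 : ∀ᶠ s in nhdsWithin t T,
      |f σ ^ lam - f s ^ lam - L * (p σ - p s)| < ε * (c / 2) := by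
    have htd := hG.tendsto
    rw [hGt] at htd
    have := Metric.tendsto_nhds.1 htd (ε * (c / 2)) (by positivity)
    filter_upwards [this] with s hs
    simpa [Real.dist_eq] using hs
  have h2 : ∀ᶠ s in nhdsWithin t T, |p s - p t| < c / 2 := by
    have := Metric.tendsto_nhds.1 hpc.tendsto (c / 2) (by positivity)
    filter_upwards [this] with s hs
    simpa [Real.dist_eq] using hs
  obtain ⟨U, hU, hsub⟩ := Filter.eventually_iff_exists_mem.1 (h1.and h2)
  rw [Metric.mem_nhdsWithin_iff] at hU
  obtain ⟨δ, hδ, hball⟩ := hU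
  refine ⟨δ, hδ, fun s hsT hst => ?_⟩
  have hsU : s ∈ U := hball ⟨by simpa [Metric.mem_ball, Real.dist_eq] using hst, hsT⟩
  obtain ⟨hs1, hs2⟩ := hsub s hsU
  have hge : c / 2 ≤ |p σ - p s| := by
    have : c ≤ |p σ - p s| + |p s - p t| := by
      calc c = |(p σ - p s) + (p s - p t)| := by rw [hc]; ring_nf
        _ ≤ |p σ - p s| + |p s - p t| := abs_add_le _ _
    linarith
  calc |f σ ^ lam - f s ^ lam - L * (p σ - p s)| ≤ ε * (c / 2) := le_of_lt hs1
    _ ≤ ε * |p σ - p s| := by nlinarith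

lemma three_rpow_ne (lam : ℝ) (hlam : 0 < lam) (hlam1 : lam ≠ 1) :
    (3 : ℝ) ^ lam ≠ 1 + 2 ^ lam := by
  have h2 : (2 : ℝ) ^ lam = 2 * 2 ^ (lam - 1) := by
    nth_rewrite 1 [show lam = 1 + (lam - 1) by ring]
    rw [Real.rpow_add (by norm_num), Real.rpow_one]
  have h3 : (3 : ℝ) ^ lam = 3 ^ (lam - 1) + 2 * 3 ^ (lam - 1) := by
    have : (3 : ℝ) ^ lam = 3 * 3 ^ (lam - 1) := by
      nth_rewrite 1 [show lam = 1 + (lam - 1) by ring]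
      rw [Real.rpow_add (by norm_num), Real.rpow_one]
    rw [this]; ring
  rcases lt_or_gt_of_ne hlam1 with h | h
  · -- lam < 1 : 3^lam < 1 + 2^lam
    have hneg : lam - 1 < 0 := by linarith
    have ha : (3 : ℝ) ^ (lam - 1) < 1 :=
      Real.rpow_lt_one_of_one_lt_of_neg (by norm_num) hneg
    have hb : (3 : ℝ) ^ (lam - 1) < 2 ^ (lam - 1) :=
      Real.rpow_lt_rpow_of_neg (by norm_num) (by norm_num) hneg
    intro heq
    rw [h3, h2] at heq
    linarith
  · -- 1 < lam : 1 + 2^lam < 3^lam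
    have hpos : 0 < lam - 1 := by linarith
    have ha : (1 : ℝ) < 3 ^ (lam - 1) := by
      rw [Real.one_lt_rpow_iff_of_pos (by norm_num)]
      exact Or.inl ⟨by norm_num, hpos⟩
    have hb : (2 : ℝ) ^ (lam - 1) < 3 ^ (lam - 1) :=
      Real.rpow_lt_rpow (by norm_num) (by norm_num) hpos
    intro heq
    rw [h3, h2] at heq
    linarith

/-- Failure of the sum rule for the structural derivative: with `f(s) = s` and
`g(s) = 2s`, at a right-scattered point `t ≥ 0` with `λ > 0`, `λ ≠ 1`, the structural
derivative of `f + g` carries the factor `3^λ`, the sum of the structural derivatives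
of `f` and `g` carries the factor `1 + 2^λ`, and these two values are distinct. -/
theorem structDeriv_sum_rule_fails
    (T : Set ℝ) (hTne : T.Nonempty) (hTc : IsClosed T)
    (t : ℝ) (ht : t ∈ T) (ht0 : 0 ≤ t) (hrs : t < tsSigma T t)
    (lam : ℝ) (hlam : 0 < lam) (hlam1 : lam ≠ 1)
    (p : ℝ → ℝ) (hpc : ContinuousWithinAt p T t) (hp : p (tsSigma T t) ≠ p t) :
    IsStructDeriv T p (fun s => s + 2 * s) lam t
      (3 ^ lam * ((tsSigma T t ^ lam - t ^ lam) / (p (tsSigma T t) - p t))) ∧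
    IsStructDeriv T p (fun s => s) lam t
      ((tsSigma T t ^ lam - t ^ lam) / (p (tsSigma T t) - p t)) ∧
    IsStructDeriv T p (fun s => 2 * s) lam t
      (2 ^ lam * ((tsSigma T t ^ lam - t ^ lam) / (p (tsSigma T t) - p t))) ∧
    (tsSigma T t ^ lam - t ^ lam) / (p (tsSigma T t) - p t) +
        2 ^ lam * ((tsSigma T t ^ lam - t ^ lam) / (p (tsSigma T t) - p t)) =
      (1 + 2 ^ lam) * ((tsSigma T t ^ lam - t ^ lam) / (p (tsSigma T t) - p t)) ∧
    3 ^ lam * ((tsSigma T t ^ lam - t ^ lam) / (p (tsSigma T t) - p t)) ≠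
      (1 + 2 ^ lam) * ((tsSigma T t ^ lam - t ^ lam) / (p (tsSigma T t) - p t)) := by
  set σ := tsSigma T t with hσ
  have hσ0 : 0 ≤ σ := le_of_lt (lt_of_le_of_lt ht0 hrs)
  -- continuity helpers
  have hrpow : ∀ a : ℝ, ContinuousAt (fun x : ℝ => x ^ lam) a ∨ a ≠ 0 → True := fun _ _ => trivial
  have hcomp : ∀ (g : ℝ → ℝ), Continuous g →
      ContinuousWithinAt (fun s => g s ^ lam) T t := by
    intro g hg
    have h1 : ContinuousAt (fun x : ℝ => x ^ lam) (g t) :=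
      Real.continuousAt_rpow_const (g t) lam (Or.inr hlam.le)
    exact h1.comp_continuousWithinAt (hg.continuousWithinAt)
  have key : ∀ (g : ℝ → ℝ), Continuous g →
      IsStructDeriv T p g lam t ((g σ ^ lam - g t ^ lam) / (p σ - p t)) :=
    fun g hg => isStructDeriv_quot T p g lam t (hcomp g hg) hpc hp
  have hmul : ∀ a : ℝ, 0 ≤ a → (a * σ) ^ lam - (a * t) ^ lam = a ^ lam * (σ ^ lam - t ^ lam) := by
    intro a ha
    rw [Real.mul_rpow ha hσ0, Real.mul_rpow ha ht0]
    ring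
  refine ⟨?_, ?_, ?_, by ring, ?_⟩
  · have := key (fun s => s + 2 * s) (by continuity)
    have h3 : (σ + 2 * σ) ^ lam - (t + 2 * t) ^ lam = 3 ^ lam * (σ ^ lam - t ^ lam) := by
      have := hmul 3 (by norm_num)
      calc (σ + 2 * σ) ^ lam - (t + 2 * t) ^ lam
          = (3 * σ) ^ lam - (3 * t) ^ lam := by ring_nf
        _ = 3 ^ lam * (σ ^ lam - t ^ lam) := this
    simpa only [h3, mul_div_assoc] using this
  · simpa using key (fun s => s) continuous_id
  · have := key (fun s => 2 * s) (by continuity)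
    have h2 : (2 * σ) ^ lam - (2 * t) ^ lam = 2 ^ lam * (σ ^ lam - t ^ lam) :=
      hmul 2 (by norm_num)
    simpa only [h2, mul_div_assoc] using this
  · have hq : (σ ^ lam - t ^ lam) / (p σ - p t) ≠ 0 := by
      apply div_ne_zero
      · have : t ^ lam < σ ^ lam := Real.rpow_lt_rpow ht0 hrs hlam
        linarith
      · exact sub_ne_zero.2 hp
    have h3 := three_rpow_ne lam hlam hlam1
    intro heq
    exact h3 (mul_right_cancel₀ hq heq)
end

section
/- Let 0 < β < 1, λ > 0, 0 < α < βλ, and c > 0. Let T be a time scale contained in [0, ∞) with 0 ∈ T, and suppose 0 is right-dense in T (σ(0) = 0, i.e. inf{s ∈ T : s > 0} = 0). Define f(s) = c·s^β and the structural function p(s) = s^α. Then 0 is a structural derivative of f at the point 0 associated with λ and p. In particular, the self-similar function f(s) = c·s^β, which is not classically differentiable at 0, is structural differentiable at 0. -/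
/-- The self-similar function `f(s) = c * s ^ β` (with `0 < β < 1`), although not
classically differentiable at `0`, has structural derivative `0` at a right-dense
point `0` of any time scale `T` contained in `[0, ∞)`, with structural function
`p(s) = s ^ α`, provided `0 < α < β * λ`. -/
theorem structDeriv_selfSimilar_rightDense
    (β lam α c : ℝ) (hβ0 : 0 < β) (hβ1 : β < 1) (hlam : 0 < lam)
    (hα0 : 0 < α) (hαβ : α < β * lam) (hc : 0 < c)
    (T : Set ℝ) (hTne : T.Nonempty) (hTc : IsClosed T)
    (hTsub : T ⊆ Set.Ici (0 : ℝ)) (h0 : (0 : ℝ) ∈ T)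
    (hrd : tsSigma T 0 = 0) :
    IsStructDeriv T (fun s => s ^ α) (fun s => c * s ^ β) lam 0 0 ∧
    ¬ DifferentiableAt ℝ (fun s : ℝ => c * s ^ β) 0 := by
  constructor
  · intro ε hε
    have hC : 0 < c ^ lam := Real.rpow_pos_of_pos hc lam
    have hγ : 0 < β * lam - α := by linarith
    refine ⟨(ε / c ^ lam) ^ (β * lam - α)⁻¹,
      Real.rpow_pos_of_pos (div_pos hε hC) _, ?_⟩
    intro s hsT hsδ
    rw [hrd]
    have hs0 : 0 ≤ s := hTsub hsT
    rw [sub_zero, abs_of_nonneg hs0] at hsδ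
    rcases eq_or_lt_of_le hs0 with h0s | h0s
    · subst h0s
      simp
    · have hz : (0:ℝ) ^ β = 0 := Real.zero_rpow hβ0.ne'
      have hzα : (0:ℝ) ^ α = 0 := Real.zero_rpow hα0.ne'
      simp only [hz, hzα, mul_zero, zero_mul, Real.zero_rpow hlam.ne', zero_sub,
        sub_zero, abs_neg]
      rw [abs_of_nonneg (Real.rpow_nonneg (by positivity) _),
        abs_of_nonneg (Real.rpow_nonneg hs0 _)]
      have key : (c * s ^ β) ^ lam = c ^ lam * s ^ (β * lam - α) * s ^ α := by
        rw [Real.mul_rpow hc.le (Real.rpow_nonneg hs0 _), ← Real.rpow_mul hs0,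
          mul_assoc, ← Real.rpow_add h0s, sub_add_cancel]
      rw [key]
      have hsb : s ^ (β * lam - α) < ε / c ^ lam := by
        calc s ^ (β * lam - α)
            < ((ε / c ^ lam) ^ (β * lam - α)⁻¹) ^ (β * lam - α) :=
              Real.rpow_lt_rpow hs0 hsδ hγ
          _ = ε / c ^ lam := by
              rw [← Real.rpow_mul (div_pos hε hC).le, inv_mul_cancel₀ hγ.ne',
                Real.rpow_one]
      have : c ^ lam * s ^ (β * lam - α) ≤ ε := by
        rw [mul_comm]
        exact le_of_lt ((lt_div_iff₀ hC).mp hsb)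
      have hsα : 0 < s ^ α := Real.rpow_pos_of_pos h0s _
      calc c ^ lam * s ^ (β * lam - α) * s ^ α ≤ ε * s ^ α := by
            exact mul_le_mul_of_nonneg_right this hsα.le
        _ = ε * s ^ α := rfl
  · intro hdiff
    have hL := hdiff.hasDerivAt
    rw [hasDerivAt_iff_tendsto_slope] at hL
    have h1 : Filter.Tendsto (slope (fun s : ℝ => c * s ^ β) 0) (nhdsWithin 0 (Set.Ioi 0))
        (nhds (deriv (fun s : ℝ => c * s ^ β) 0)) :=
      hL.mono_left (nhdsWithin_mono _ (fun x hx => ne_of_gt hx))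
    have h2 : Filter.Tendsto (slope (fun s : ℝ => c * s ^ β) 0)
        (nhdsWithin 0 (Set.Ioi 0)) Filter.atTop := by
      have heq : ∀ x ∈ Set.Ioi (0:ℝ),
          slope (fun s : ℝ => c * s ^ β) 0 x = c * (x⁻¹) ^ (1 - β) := by
        intro x hx
        have hx0 : (0:ℝ) < x := hx
        rw [slope_def_field, div_eq_iff (sub_ne_zero.mpr hx0.ne')]
        rw [Real.zero_rpow hβ0.ne', mul_zero, sub_zero, sub_zero,
          Real.inv_rpow hx0.le, ← Real.rpow_neg hx0.le, mul_assoc,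
          ← Real.rpow_add_one hx0.ne']
        norm_num
      have hmain : Filter.Tendsto (fun x : ℝ => c * (x⁻¹) ^ (1 - β))
          (nhdsWithin 0 (Set.Ioi 0)) Filter.atTop := by
        apply Filter.Tendsto.const_mul_atTop hc
        exact (tendsto_rpow_atTop (by linarith)).comp tendsto_inv_nhdsGT_zero
      exact hmain.congr' (Filter.eventuallyEq_of_mem self_mem_nhdsWithin
        (fun x hx => (heq x hx).symm))
    exact not_tendsto_nhds_of_tendsto_atTop h2 _ h1
end

section
/- Let T be a time scale, let t ∈ T be right-scattered with t > 0, let λ > 0, and let p : ℝ → ℝ be continuous at t relative to T with p(σ(t)) ≠ p(t). Then −(σ(t)^λ − t^λ) / ((p(σ(t)) − p(t)) · (t·σ(t))^λ) is a structural derivative of the function g(s) = 1/s at t associated with λ and p; that is, g^{Δ_p^λ}(t) = −(t)^{Δ_p^λ} / (σ(t)·t)^λ, where (t)^{Δ_p^λ} = (σ(t)^λ − t^λ)/(p(σ(t)) − p(t)) is the structural derivative of the identity function at t. -/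
/-- At a right-scattered point `t > 0`, the function `g(s) = 1/s` has structural
derivative `-(σ(t) ^ λ - t ^ λ) / ((p (σ t) - p t) * (t * σ t) ^ λ)`, i.e. the
negative of the structural derivative of the identity divided by `(σ(t) * t) ^ λ`. -/
theorem structDeriv_one_div
    (T : Set ℝ) (hTne : T.Nonempty) (hTc : IsClosed T)
    (t : ℝ) (ht : t ∈ T) (ht0 : 0 < t) (hrs : t < tsSigma T t)
    (lam : ℝ) (hlam : 0 < lam)
    (p : ℝ → ℝ) (hpc : ContinuousWithinAt p T t) (hp : p (tsSigma T t) ≠ p t) :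
    IsStructDeriv T p (fun s => 1 / s) lam t
      (-(tsSigma T t ^ lam - t ^ lam) /
        ((p (tsSigma T t) - p t) * (t * tsSigma T t) ^ lam)) := by
  intro ε hε
  set σ := tsSigma T t with hσdef
  have hσ0 : 0 < σ := ht0.trans hrs
  set L : ℝ := -(σ ^ lam - t ^ lam) / ((p σ - p t) * (t * σ) ^ lam) with hL
  have hc : 0 < |p σ - p t| := abs_pos.mpr (sub_ne_zero.mpr hp)
  -- the error at s = t is exactly zero
  have hzero : (1 / σ) ^ lam - (1 / t) ^ lam - L * (p σ - p t) = 0 := by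
    have h1 : ((1 : ℝ) / σ) ^ lam = (σ ^ lam)⁻¹ := by
      rw [one_div, Real.inv_rpow hσ0.le]
    have h2 : ((1 : ℝ) / t) ^ lam = (t ^ lam)⁻¹ := by
      rw [one_div, Real.inv_rpow ht0.le]
    have h3 : (t * σ) ^ lam = t ^ lam * σ ^ lam := Real.mul_rpow ht0.le hσ0.le
    have htl : (0:ℝ) < t ^ lam := Real.rpow_pos_of_pos ht0 lam
    have hσl : (0:ℝ) < σ ^ lam := Real.rpow_pos_of_pos hσ0 lam
    have hpne : p σ - p t ≠ 0 := sub_ne_zero.mpr hp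
    rw [h1, h2, hL, h3]
    field_simp
    ring
  -- the error function is continuous within T at t
  have hGc : ContinuousWithinAt (fun s : ℝ => ((1:ℝ) / s) ^ lam) T t := by
    have h1 : ContinuousAt (fun s : ℝ => (1:ℝ) / s) t :=
      ContinuousAt.div continuousAt_const continuousAt_id ht0.ne'
    have h2 : ContinuousAt (fun x : ℝ => x ^ lam) (1 / t) :=
      Real.continuousAt_rpow_const _ _ (Or.inr hlam.le)
    exact (h2.comp h1).continuousWithinAt
  have hHc : ContinuousWithinAt
      (fun s : ℝ => ε * |p σ - p s| -
        |(1 / σ) ^ lam - (1 / s) ^ lam - L * (p σ - p s)|) T t :=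
    (continuousWithinAt_const.mul (continuousWithinAt_const.sub hpc).abs).sub
      (((continuousWithinAt_const.sub hGc).sub
        (continuousWithinAt_const.mul (continuousWithinAt_const.sub hpc))).abs)
  have hHt : (0:ℝ) < ε * |p σ - p t| -
      |(1 / σ) ^ lam - (1 / t) ^ lam - L * (p σ - p t)| := by
    rw [hzero, abs_zero, sub_zero]
    exact mul_pos hε hc
  have hev : ∀ᶠ s in nhdsWithin t T, (0:ℝ) <
      ε * |p σ - p s| - |(1 / σ) ^ lam - (1 / s) ^ lam - L * (p σ - p s)| :=
    hHc.eventually (eventually_gt_nhds hHt)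
  rw [Filter.eventually_iff, Metric.mem_nhdsWithin_iff] at hev
  obtain ⟨δ, hδ, hδ'⟩ := hev
  refine ⟨δ, hδ, fun s hs hst => ?_⟩
  have := hδ' ⟨Metric.mem_ball.mpr (by rwa [Real.dist_eq]), hs⟩
  simp only [one_div, Set.mem_setOf_eq] at this ⊢
  linarith [this]
end
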